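/- arXiv:1303.2162 — 2 statements merged into one kernel-verified Lean document; each statement's English description precedes it below -/
import Mathlib

section
/- Let R = [a,b] x [c,d] be a nondegenerate axis-parallel rectangle and let T be a finite family of axis-parallel segments in the plane. Suppose every point of R is orthogonally visible (within R) to some segment of T, where a point p is visible to segment t if some q in t has pq perpendicular to t and pq contained in R. Then either the vertical segments of T alone collectively see all of R, or the horizontal segments of T alone collectively see all of R. -/
/-!
If some point `p` is seen by no vertical segment and some `p'` by no horizontal one, look at
the point `r = (p'.1, p.2)` of the rectangle. Some segment sees `r`. In a convex region,
visibility of a point only requires the foot point to lie in the region, so a vertical segment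
seeing `r` also sees `p` (same row), and a horizontal one also sees `p'` (same column).
-/

/-- A point `p` is orthogonally visible (within the region `R`) to the
axis-parallel segment with endpoints `t.1`, `t.2`.  A vertical segment
(equal `x`-coordinates of its endpoints) sees points via horizontal
normals, a horizontal segment via vertical normals. -/
def seesIn (R : Set (ℝ × ℝ)) (t : (ℝ × ℝ) × (ℝ × ℝ)) (p : ℝ × ℝ) : Prop :=
  if t.1.1 = t.2.1 then
    ∃ q ∈ segment ℝ t.1 t.2, q.2 = p.2 ∧ segment ℝ p q ⊆ R
  else
    ∃ q ∈ segment ℝ t.1 t.2, q.1 = p.1 ∧ segment ℝ p q ⊆ R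

section Convex

variable {R : Set (ℝ × ℝ)} {t : (ℝ × ℝ) × (ℝ × ℝ)} {p r : ℝ × ℝ}

theorem seesIn_of_vertical_of_snd_eq (hR : Convex ℝ R) (hv : t.1.1 = t.2.1)
    (hr : seesIn R t r) (hp : p ∈ R) (hpr : p.2 = r.2) : seesIn R t p := by
  rw [seesIn, if_pos hv] at hr ⊢
  obtain ⟨q, hq, hq2, hseg⟩ := hr
  exact ⟨q, hq, hq2.trans hpr.symm,
    hR.segment_subset hp (hseg (right_mem_segment ℝ r q))⟩

theorem seesIn_of_not_vertical_of_fst_eq (hR : Convex ℝ R) (hv : t.1.1 ≠ t.2.1)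
    (hr : seesIn R t r) (hp : p ∈ R) (hpr : p.1 = r.1) : seesIn R t p := by
  rw [seesIn, if_neg hv] at hr ⊢
  obtain ⟨q, hq, hq1, hseg⟩ := hr
  exact ⟨q, hq, hq1.trans hpr.symm,
    hR.segment_subset hp (hseg (right_mem_segment ℝ r q))⟩

end Convex

theorem stmt2_general (a b c d : ℝ)
    (R : Set (ℝ × ℝ)) (hR : R = Set.Icc a b ×ˢ Set.Icc c d)
    (T : Finset ((ℝ × ℝ) × (ℝ × ℝ)))
    (haxis : ∀ t ∈ T, t.1.1 = t.2.1 ∨ t.1.2 = t.2.2)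
    (hcov : ∀ p ∈ R, ∃ t ∈ T, seesIn R t p) :
    (∀ p ∈ R, ∃ t ∈ T, t.1.1 = t.2.1 ∧ seesIn R t p) ∨
    (∀ p ∈ R, ∃ t ∈ T, t.1.2 = t.2.2 ∧ seesIn R t p) := by
  have hconv : Convex ℝ R := hR ▸ (convex_Icc a b).prod (convex_Icc c d)
  by_contra! ⟨⟨p, hp, hpv⟩, ⟨p', hp', hph⟩⟩
  have hrR : (p'.1, p.2) ∈ R := by
    subst hR
    exact ⟨hp'.1, hp.2⟩
  obtain ⟨t, ht, hsee⟩ := hcov _ hrR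
  by_cases hv : t.1.1 = t.2.1
  · exact hpv t ht hv (seesIn_of_vertical_of_snd_eq hconv hv hsee hp rfl)
  · exact hph t ht ((haxis t ht).resolve_left hv)
      (seesIn_of_not_vertical_of_fst_eq hconv hv hsee hp' rfl)

theorem stmt2 (a b c d : ℝ) (hab : a < b) (hcd : c < d)
    (R : Set (ℝ × ℝ)) (hR : R = Set.Icc a b ×ˢ Set.Icc c d)
    (T : Finset ((ℝ × ℝ) × (ℝ × ℝ)))
    (haxis : ∀ t ∈ T, t.1.1 = t.2.1 ∨ t.1.2 = t.2.2)
    (hcov : ∀ p ∈ R, ∃ t ∈ T, seesIn R t p) :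
    (∀ p ∈ R, ∃ t ∈ T, t.1.1 = t.2.1 ∧ seesIn R t p) ∨
    (∀ p ∈ R, ∃ t ∈ T, t.1.2 = t.2.2 ∧ seesIn R t p) :=
  stmt2_general a b c d R hR T haxis hcov
end

section
/- Let G = (A ∪ B, E) be a finite bipartite graph with positive vertex weights. Then the minimum weight of a vertex cover of G equals the maximum value of a fractional matching, and in particular, by LP duality and integrality of the bipartite vertex cover polytope, a minimum-weight vertex cover can be found among integral solutions of the LP relaxation. -/
/-!
Weak duality is double counting: every edge has an endpoint in a cover `S`, so the value of a
fractional matching `y` is at most the sum over `S` of the loads (the totals of `y` at a vertex),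
hence at most `w(S)`. A vertex is saturated when its load equals its weight.

For the converse take a maximum fractional matching `y`, which exists by compactness. Let `R` be
the set of vertices reachable from an unsaturated vertex of `A` by alternating walks, which go
from `A` to `B` along any edge and from `B` back to `A` along edges with `y > 0`. If a vertex of
`B ∩ R` were unsaturated, pushing a little flow along such a walk would increase `y`. So
`C = (A \ R) ∪ (B ∩ R)` consists of saturated vertices; it is a vertex cover, and it meets every
edge with `y > 0` exactly once. Counting `y` at the vertices of `C` gives `w(C) = ∑ y`.
-/

open Finset Filter Topology

lemma eventually_nhdsGT_zero_add_mul_pos {a : ℝ} (ha : 0 < a) (c : ℝ) :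
    ∀ᶠ t in 𝓝[>] (0 : ℝ), 0 < a + t * c := by
  have : Tendsto (fun t : ℝ => a + t * c) (𝓝[>] 0) (𝓝 a) := by
    simpa using ((continuous_id.mul continuous_const).const_add a).tendsto (0 : ℝ)
      |>.mono_left nhdsWithin_le_nhds
  exact this.eventually_const_lt ha

namespace SimpleGraph

variable {V : Type*}

lemma exists_eq_mk_of_mem_edgeSet {G : SimpleGraph V} {A : Set V}
    (hbip : ∀ u v, G.Adj u v → (u ∈ A ↔ v ∉ A)) {e : Sym2 V} (he : e ∈ G.edgeSet) :
    ∃ a b, a ∈ A ∧ b ∉ A ∧ G.Adj a b ∧ e = s(a, b) := by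
  induction e with | _ u v => ?_
  by_cases hu : u ∈ A
  · exact ⟨u, v, hu, (hbip u v he).mp hu, he, rfl⟩
  · exact ⟨v, u, not_not.mp (mt (hbip u v he).mpr hu), hu, G.adj_symm he, Sym2.eq_swap⟩

lemma card_filter_mem_eq_one [DecidableEq V] {S : Finset V} {a b : V} (h : a ∈ S ↔ b ∉ S) :
    #{v ∈ S | v ∈ s(a, b)} = 1 := by
  rw [card_eq_one]
  by_cases ha : a ∈ S
  · exact ⟨a, by ext v; simp; grind⟩
  · exact ⟨b, by ext v; simp; grind⟩

variable [Fintype V] [DecidableEq V] (G : SimpleGraph V) [DecidableRel G.Adj]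

def incidenceSum (y : Sym2 V → ℝ) (v : V) : ℝ := ∑ e ∈ G.incidenceFinset v, y e

structure IsFracMatching (w : V → ℝ) (y : Sym2 V → ℝ) : Prop where
  nonneg : ∀ e, 0 ≤ y e
  eq_zero_of_notMem : ∀ e, e ∉ G.edgeSet → y e = 0
  incidenceSum_le : ∀ v, G.incidenceSum y v ≤ w v

variable {G}

@[simp]
lemma incidenceSum_add (y z : Sym2 V → ℝ) (v : V) :
    G.incidenceSum (y + z) v = G.incidenceSum y v + G.incidenceSum z v :=
  sum_add_distrib

@[simp]
lemma incidenceSum_smul (t : ℝ) (y : Sym2 V → ℝ) (v : V) :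
    G.incidenceSum (t • y) v = t * G.incidenceSum y v := by
  simp [incidenceSum, mul_sum]

@[simp]
lemma incidenceSum_single {e : Sym2 V} (he : e ∈ G.edgeSet) (c : ℝ) (v : V) :
    G.incidenceSum (Pi.single e c) v = if v ∈ e then c else 0 := by
  simp [incidenceSum, sum_pi_single', mem_incidenceFinset, incidenceSet, he]

lemma incidenceSum_add_smul_add_single {e : Sym2 V} (he : e ∈ G.edgeSet)
    (y d : Sym2 V → ℝ) (t c : ℝ) (v : V) :
    G.incidenceSum (y + t • (d + Pi.single e c)) v =
      G.incidenceSum (y + t • d) v + if v ∈ e then t * c else 0 := by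
  rw [smul_add, ← add_assoc, incidenceSum_add, ← Pi.single_smul, incidenceSum_single he,
    smul_eq_mul]

lemma sum_incidenceSum (y : Sym2 V → ℝ) (S : Finset V) :
    ∑ v ∈ S, G.incidenceSum y v = ∑ e ∈ G.edgeFinset, #{v ∈ S | v ∈ e} * y e := by
  simp_rw [incidenceSum, incidenceFinset_eq_filter, sum_filter]
  rw [sum_comm]
  refine sum_congr rfl fun e _ => ?_
  rw [← sum_filter, sum_const, nsmul_eq_mul]

lemma IsFracMatching.sum_le_sum_of_isVertexCover {w : V → ℝ} {y : Sym2 V → ℝ}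
    (hy : G.IsFracMatching w y) {S : Finset V} (hS : G.IsVertexCover S) :
    ∑ e ∈ G.edgeFinset, y e ≤ ∑ v ∈ S, w v := calc
  ∑ e ∈ G.edgeFinset, y e ≤ ∑ e ∈ G.edgeFinset, #{v ∈ S | v ∈ e} * y e := by
    refine sum_le_sum fun e he => le_mul_of_one_le_left (hy.nonneg e) ?_
    induction e with | _ a b => ?_
    obtain ⟨u, hu, hue⟩ : ∃ u ∈ S, u ∈ s(a, b) := by
      rcases hS (mem_edgeFinset.mp he) with h | h
      exacts [⟨a, h, Sym2.mem_mk_left a b⟩, ⟨b, h, Sym2.mem_mk_right a b⟩]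
    exact_mod_cast card_pos.mpr ⟨u, mem_filter.mpr ⟨hu, hue⟩⟩
  _ = ∑ v ∈ S, G.incidenceSum y v := (sum_incidenceSum y S).symm
  _ ≤ ∑ v ∈ S, w v := sum_le_sum fun v _ => hy.incidenceSum_le v

lemma IsFracMatching.le_sum {w : V → ℝ} {y : Sym2 V → ℝ} (hy : G.IsFracMatching w y)
    (hw : ∀ v, 0 ≤ w v) (e : Sym2 V) : y e ≤ ∑ v, w v := by
  have hw_le (v : V) : w v ≤ ∑ v, w v := single_le_sum (fun v _ => hw v) (mem_univ v)
  by_cases he : e ∈ G.edgeSet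
  · induction e with | _ a b => ?_
    have hab : s(a, b) ∈ G.incidenceFinset a := by
      simp [mem_incidenceFinset, incidenceSet, he]
    calc y s(a, b) ≤ G.incidenceSum y a := single_le_sum (fun e _ => hy.nonneg e) hab
      _ ≤ w a := hy.incidenceSum_le a
      _ ≤ ∑ v, w v := hw_le a
  · rw [hy.eq_zero_of_notMem e he]
    exact sum_nonneg fun v _ => hw v

lemma isClosed_setOf_isFracMatching (w : V → ℝ) : IsClosed {y | G.IsFracMatching w y} := by
  have hset : {y | G.IsFracMatching w y} = (⋂ e, {y : Sym2 V → ℝ | 0 ≤ y e}) ∩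
      (⋂ e ∈ G.edgeSetᶜ, {y | y e = 0}) ∩ ⋂ v, {y | G.incidenceSum y v ≤ w v} := by
    ext y
    simp only [Set.mem_ofPred_eq, Set.mem_inter_iff, Set.mem_iInter, Set.mem_compl_iff]
    exact ⟨fun ⟨h₁, h₂, h₃⟩ => ⟨⟨h₁, h₂⟩, h₃⟩, fun ⟨⟨h₁, h₂⟩, h₃⟩ => ⟨h₁, h₂, h₃⟩⟩
  rw [hset]
  refine .inter (.inter ?_ ?_) ?_
  · exact isClosed_iInter fun e => isClosed_le continuous_const (continuous_apply e)
  · exact isClosed_biInter fun e _ => isClosed_eq (continuous_apply e) continuous_const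
  · exact isClosed_iInter fun v =>
      isClosed_le (continuous_finsetSum _ fun e _ => continuous_apply e) continuous_const

lemma isCompact_setOf_isFracMatching {w : V → ℝ} (hw : ∀ v, 0 ≤ w v) :
    IsCompact {y | G.IsFracMatching w y} :=
  isCompact_Icc.of_isClosed_subset (isClosed_setOf_isFracMatching w)
    fun _ hy => ⟨hy.nonneg, hy.le_sum hw⟩

lemma exists_isMaxOn_sum_isFracMatching {w : V → ℝ} (hw : ∀ v, 0 ≤ w v) :
    ∃ y ∈ {y | G.IsFracMatching w y},
      IsMaxOn (fun z => ∑ e ∈ G.edgeFinset, z e) {z | G.IsFracMatching w z} y := by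
  have hzero : G.IsFracMatching w 0 := ⟨fun _ => le_rfl, fun _ _ => rfl, by simpa [incidenceSum]⟩
  exact (isCompact_setOf_isFracMatching hw).exists_isMaxOn ⟨0, hzero⟩
    (continuous_finsetSum _ fun e _ => continuous_apply e).continuousOn

section Augmentation

variable {A : Set V} {w : V → ℝ} {y : Sym2 V → ℝ}

/- Alternating walks are replaced by directions `d` in which `y` may move for a short time `t > 0`:
a walk from an unsaturated vertex of `A` to `a ∈ A` gives a direction that frees capacity at `a`
without changing the value of `y` or the loads on `B = Aᶜ`; one ending at `b ∈ B` gives a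
direction that raises the value by `t` and, on `B`, only the load of `b`. -/
variable (G A w y) in
def IsShiftable (d : Sym2 V → ℝ) : Prop :=
  (∀ e, e ∉ G.edgeSet → d e = 0) ∧
    ∀ᶠ t in 𝓝[>] (0 : ℝ), 0 ≤ y + t • d ∧ ∀ u ∈ A, G.incidenceSum (y + t • d) u ≤ w u

variable (G A w y) in
def IsFreeable (a : V) : Prop :=
  ∃ d, G.IsShiftable A w y d ∧ ∑ e ∈ G.edgeFinset, d e = 0 ∧
    (∀ u ∉ A, G.incidenceSum d u = 0) ∧
    ∀ᶠ t in 𝓝[>] (0 : ℝ), G.incidenceSum (y + t • d) a + t ≤ w a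

variable (G A w y) in
def IsRaisable (b : V) : Prop :=
  ∃ d, G.IsShiftable A w y d ∧ ∑ e ∈ G.edgeFinset, d e = 1 ∧
    ∀ u ∉ A, G.incidenceSum d u = if u = b then 1 else 0

lemma isFreeable_of_incidenceSum_lt (hy : G.IsFracMatching w y) {a : V}
    (ha : G.incidenceSum y a < w a) : G.IsFreeable A w y a := by
  refine ⟨0, ⟨fun _ _ => rfl, .of_forall fun t => ?_⟩, by simp,
    fun u _ => by simp [incidenceSum], ?_⟩
  · simpa using ⟨hy.nonneg, fun u _ => hy.incidenceSum_le u⟩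
  · filter_upwards [eventually_nhdsGT_zero_add_mul_pos (sub_pos.mpr ha) (-1)] with t ht
    simp only [smul_zero, add_zero]
    linarith

lemma IsFreeable.isRaisable {a b : V} (ha : G.IsFreeable A w y a) (haA : a ∈ A) (hbA : b ∉ A)
    (hab : G.Adj a b) : G.IsRaisable A w y b := by
  obtain ⟨d, ⟨hd, hshift⟩, hsum, hdB, hslack⟩ := ha
  have he : s(a, b) ∈ G.edgeSet := hab
  have hne (u : V) (hu : u ∈ A) : u ≠ b := fun h => hbA (h ▸ hu)
  refine ⟨d + Pi.single s(a, b) 1, ⟨fun e he' => ?_, ?_⟩, ?_, fun u hu => ?_⟩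
  · have : e ≠ s(a, b) := fun h => he' (h ▸ he)
    simp [hd e he', this]
  · filter_upwards [hshift, hslack, self_mem_nhdsWithin] with t ⟨hnn, hA⟩ hslk (ht : 0 < t)
    refine ⟨?_, fun u hu => ?_⟩
    · rw [smul_add, ← add_assoc]
      exact add_nonneg hnn (smul_nonneg ht.le (by simp [Pi.single_nonneg]))
    rw [incidenceSum_add_smul_add_single he]
    simp only [Sym2.mem_iff, hne u hu, or_false]
    split_ifs with hua
    · subst hua; linarith
    · simpa using hA u hu
  · simp [sum_add_distrib, sum_pi_single', he, hsum]
  · have : u ≠ a := fun h => hu (h ▸ haA)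
    simp [incidenceSum_single he, hdB u hu, this]

lemma IsRaisable.isFreeable {a b : V} (hb : G.IsRaisable A w y b) (haA : a ∈ A)
    (hab : G.Adj a b) (hy : 0 < y s(a, b)) : G.IsFreeable A w y a := by
  obtain ⟨d, ⟨hd, hshift⟩, hsum, hdB⟩ := hb
  have he : s(a, b) ∈ G.edgeSet := hab
  refine ⟨d + Pi.single s(a, b) (-1), ⟨fun e he' => ?_, ?_⟩, ?_, fun u hu => ?_, ?_⟩
  · have : e ≠ s(a, b) := fun h => he' (h ▸ he)
    simp [hd e he', this]
  · filter_upwards [hshift, eventually_nhdsGT_zero_add_mul_pos hy (d s(a, b) - 1),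
      self_mem_nhdsWithin] with t ⟨hnn, hA⟩ hpos (ht : 0 < t)
    refine ⟨fun e => ?_, fun u hu => ?_⟩
    · by_cases he' : e = s(a, b)
      · subst he'
        simp only [Pi.add_apply, Pi.smul_apply, Pi.single_eq_same, smul_eq_mul, Pi.zero_apply]
        linarith
      · simpa [he'] using hnn e
    · have := hA u hu
      rw [incidenceSum_add_smul_add_single he]
      split_ifs <;> linarith
  · simp [sum_add_distrib, sum_pi_single', he, hsum]
  · have : u ≠ a := fun h => hu (h ▸ haA)
    rw [incidenceSum_add, incidenceSum_single he, hdB u hu]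
    by_cases hub : u = b <;> simp [hub, this]
  · filter_upwards [hshift] with t ⟨_, hA⟩
    rw [incidenceSum_add_smul_add_single he, if_pos (Sym2.mem_mk_left a b)]
    linarith [hA a haA]

lemma incidenceSum_eq_of_isRaisable (hy : G.IsFracMatching w y)
    (hmax : IsMaxOn (fun z => ∑ e ∈ G.edgeFinset, z e) {z | G.IsFracMatching w z} y)
    {b : V} (hbA : b ∉ A) (hb : G.IsRaisable A w y b) : G.incidenceSum y b = w b := by
  refine (hy.incidenceSum_le b).antisymm (not_lt.mp fun hlt => ?_)
  obtain ⟨d, ⟨hd, hshift⟩, hsum, hdB⟩ := hb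
  obtain ⟨t, ⟨hnn, hA⟩, hslack, ht : 0 < t⟩ := (hshift.and
    ((eventually_nhdsGT_zero_add_mul_pos (sub_pos.mpr hlt) (-1)).and self_mem_nhdsWithin)).exists
  have hz : G.IsFracMatching w (y + t • d) := by
    refine ⟨hnn, fun e he => by simp [hy.eq_zero_of_notMem e he, hd e he], fun u => ?_⟩
    by_cases huA : u ∈ A
    · exact hA u huA
    rw [incidenceSum_add, incidenceSum_smul, hdB u huA]
    split_ifs with hub
    · subst hub; linarith
    · simpa using hy.incidenceSum_le u
  have := isMaxOn_iff.mp hmax _ hz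
  simp only [Pi.add_apply, Pi.smul_apply, smul_eq_mul, sum_add_distrib, ← mul_sum, hsum] at this
  linarith

variable (G A w y) in
open Classical in
noncomputable def konigCover : Finset V :=
  {v | v ∈ A ∧ ¬ G.IsFreeable A w y v ∨ v ∉ A ∧ G.IsRaisable A w y v}

lemma mem_konigCover_of_mem {a : V} (ha : a ∈ A) :
    a ∈ G.konigCover A w y ↔ ¬ G.IsFreeable A w y a := by
  simp [konigCover, ha]

lemma mem_konigCover_of_notMem {b : V} (hb : b ∉ A) :
    b ∈ G.konigCover A w y ↔ G.IsRaisable A w y b := by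
  simp [konigCover, hb]

lemma isVertexCover_konigCover (hbip : ∀ u v, G.Adj u v → (u ∈ A ↔ v ∉ A)) :
    G.IsVertexCover (G.konigCover A w y : Set V) := by
  intro u v huv
  obtain ⟨a, b, haA, hbA, hab, hs⟩ := exists_eq_mk_of_mem_edgeSet hbip (e := s(u, v)) huv
  have : a ∈ G.konigCover A w y ∨ b ∈ G.konigCover A w y := by
    rw [mem_konigCover_of_mem haA, mem_konigCover_of_notMem hbA, or_iff_not_imp_left, not_not]
    exact fun ha => ha.isRaisable haA hbA hab
  rcases Sym2.eq_iff.mp hs with ⟨rfl, rfl⟩ | ⟨rfl, rfl⟩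
  exacts [this, this.symm]

lemma incidenceSum_eq_of_mem_konigCover (hy : G.IsFracMatching w y)
    (hmax : IsMaxOn (fun z => ∑ e ∈ G.edgeFinset, z e) {z | G.IsFracMatching w z} y)
    {v : V} (hv : v ∈ G.konigCover A w y) : G.incidenceSum y v = w v := by
  by_cases hvA : v ∈ A
  · rw [mem_konigCover_of_mem hvA] at hv
    exact (hy.incidenceSum_le v).antisymm
      (not_lt.mp (mt (isFreeable_of_incidenceSum_lt hy) hv))
  · exact incidenceSum_eq_of_isRaisable hy hmax hvA ((mem_konigCover_of_notMem hvA).mp hv)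

lemma card_filter_mem_konigCover (hbip : ∀ u v, G.Adj u v → (u ∈ A ↔ v ∉ A))
    {e : Sym2 V} (he : e ∈ G.edgeSet) (hpos : 0 < y e) :
    #{v ∈ G.konigCover A w y | v ∈ e} = 1 := by
  obtain ⟨a, b, haA, hbA, hab, rfl⟩ := exists_eq_mk_of_mem_edgeSet hbip he
  refine card_filter_mem_eq_one ?_
  rw [mem_konigCover_of_mem haA, mem_konigCover_of_notMem hbA]
  exact ⟨fun ha hb => ha (hb.isFreeable haA hab hpos), fun hb ha => hb (ha.isRaisable haA hbA hab)⟩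

lemma sum_konigCover (hbip : ∀ u v, G.Adj u v → (u ∈ A ↔ v ∉ A)) (hy : G.IsFracMatching w y)
    (hmax : IsMaxOn (fun z => ∑ e ∈ G.edgeFinset, z e) {z | G.IsFracMatching w z} y) :
    ∑ v ∈ G.konigCover A w y, w v = ∑ e ∈ G.edgeFinset, y e := calc
  _ = ∑ v ∈ G.konigCover A w y, G.incidenceSum y v :=
    (sum_congr rfl fun v hv => incidenceSum_eq_of_mem_konigCover hy hmax hv).symm
  _ = ∑ e ∈ G.edgeFinset, #{v ∈ G.konigCover A w y | v ∈ e} * y e := sum_incidenceSum y _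
  _ = ∑ e ∈ G.edgeFinset, y e := by
    refine sum_congr rfl fun e he => ?_
    rcases (hy.nonneg e).eq_or_lt with h | h
    · rw [← h, mul_zero]
    · rw [card_filter_mem_konigCover hbip (mem_edgeFinset.mp he) h, Nat.cast_one, one_mul]

end Augmentation

end SimpleGraph

theorem stmt13 {V : Type*} [Fintype V] [DecidableEq V]
    (G : SimpleGraph V) [DecidableRel G.Adj]
    (A : Set V) (hbip : ∀ u v, G.Adj u v → (u ∈ A ↔ v ∉ A))
    (w : V → ℝ) (hw : ∀ v, 0 < w v) :
    sInf {c : ℝ | ∃ S : Finset V,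
        (∀ u v, G.Adj u v → u ∈ S ∨ v ∈ S) ∧ c = ∑ v ∈ S, w v}
      =
    sSup {c : ℝ | ∃ y : Sym2 V → ℝ, (∀ e, 0 ≤ y e) ∧
        (∀ e, e ∉ G.edgeSet → y e = 0) ∧
        (∀ v, ∑ e ∈ G.incidenceFinset v, y e ≤ w v) ∧
        c = ∑ e ∈ G.edgeFinset, y e} := by
  obtain ⟨y, hy, hmax⟩ := G.exists_isMaxOn_sum_isFracMatching fun v => (hw v).le
  rw [IsLeast.csInf_eq (a := ∑ e ∈ G.edgeFinset, y e), IsGreatest.csSup_eq]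
  · exact ⟨⟨y, hy.nonneg, hy.eq_zero_of_notMem, hy.incidenceSum_le, rfl⟩,
      fun _ ⟨z, hz₀, hz₁, hz₂, hc⟩ => hc ▸ isMaxOn_iff.mp hmax z ⟨hz₀, hz₁, hz₂⟩⟩
  · exact ⟨⟨G.konigCover A w y, fun _ _ huv => SimpleGraph.isVertexCover_konigCover hbip huv,
      (SimpleGraph.sum_konigCover hbip hy hmax).symm⟩,
      fun _ ⟨S, hS, hc⟩ => hc ▸ hy.sum_le_sum_of_isVertexCover fun _ _ huv => hS _ _ huv⟩
end
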